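/- Let Ψ : ℝ^L → ℝ^N be a linear map between Euclidean spaces with adjoint Ψ† : ℝ^N → ℝ^L satisfying Ψ†Ψ = I (the identity on ℝ^L). Fix λ > 0, μ > 0 and z ∈ ℝ^N, and let soft_{λμ} denote componentwise soft-thresholding on ℝ^L with threshold λμ (soft_τ(v)_k = v_k(|v_k| − τ)/|v_k| if |v_k| > τ, else 0). Then the point z + Ψ(soft_{λμ}(Ψ†z) − Ψ†z) is a global minimiser over u ∈ ℝ^N of the function u ↦ μ‖Ψ†u‖₁ + ‖u − z‖₂²/(2λ), where ‖v‖₁ = ∑_k |v_k|. -/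

import Mathlib

/-!
Since `Ψ† Ψ = I`, the map `Ψ` is an isometry and `Ψ†` is a contraction. At the candidate
`p = z + Ψ (s - Ψ† z)` with `s = soft_{λμ}(Ψ† z)` one has `Ψ† p = s` and `‖p - z‖ = ‖s - Ψ† z‖`, so
the objective at `p` is the separable objective `μ ‖v‖₁ + ‖v - Ψ† z‖² / (2λ)` at `v = s`. That
objective is minimised coordinatewise by soft-thresholding, and at `v = Ψ† u` it is bounded by the
objective at `u` because `‖Ψ† u - Ψ† z‖ ≤ ‖u - z‖`.
-/

open ContinuousLinearMap

/-- Componentwise soft-thresholding operator with threshold `τ` on `ℝ^L`. -/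
noncomputable def softThresh {L : ℕ} (τ : ℝ) (v : EuclideanSpace ℝ (Fin L)) :
    EuclideanSpace ℝ (Fin L) :=
  WithLp.toLp 2 (fun k => if τ < |v k| then v k * (|v k| - τ) / |v k| else 0)

noncomputable def softThreshReal (τ w : ℝ) : ℝ :=
  if τ < |w| then w * (|w| - τ) / |w| else 0

lemma softThresh_apply {L : ℕ} (τ : ℝ) (v : EuclideanSpace ℝ (Fin L)) (k : Fin L) :
    softThresh τ v k = softThreshReal τ (v k) :=
  rfl

section softThreshReal

variable {τ w : ℝ}

lemma softThreshReal_of_lt (hτ : 0 ≤ τ) (hw : τ < w) : softThreshReal τ w = w - τ := by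
  have hw0 : 0 < w := hτ.trans_lt hw
  rw [softThreshReal, abs_of_pos hw0, if_pos hw]
  field_simp

lemma softThreshReal_of_lt_neg (hτ : 0 ≤ τ) (hw : w < -τ) : softThreshReal τ w = w + τ := by
  have hw0 : w < 0 := hw.trans_le (neg_nonpos.mpr hτ)
  rw [softThreshReal, abs_of_neg hw0, if_pos (by linarith)]
  field_simp [hw0.ne]
  ring

lemma softThreshReal_of_abs_le (hw : |w| ≤ τ) : softThreshReal τ w = 0 :=
  if_neg hw.not_gt

theorem softThreshReal_minimizes (hτ : 0 ≤ τ) (t : ℝ) :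
    τ * |softThreshReal τ w| + (softThreshReal τ w - w) ^ 2 / 2 ≤ τ * |t| + (t - w) ^ 2 / 2 := by
  have hτt : τ * t ≤ τ * |t| := mul_le_mul_of_nonneg_left (le_abs_self t) hτ
  have hτt' : -(τ * t) ≤ τ * |t| := by
    simpa [mul_neg] using mul_le_mul_of_nonneg_left (neg_le_abs t) hτ
  rcases lt_or_ge τ |w| with hw | hw
  · rcases lt_abs.mp hw with hpos | hneg
    · rw [softThreshReal_of_lt hτ hpos, abs_of_pos (by linarith)]
      nlinarith [sq_nonneg (t - w + τ)]
    · rw [softThreshReal_of_lt_neg hτ (by linarith), abs_of_neg (by linarith)]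
      nlinarith [sq_nonneg (t - w - τ)]
  · rw [softThreshReal_of_abs_le hw]
    have htw : t * w ≤ |t| * τ :=
      (le_abs_self _).trans ((abs_mul t w).trans_le (mul_le_mul_of_nonneg_left hw (abs_nonneg t)))
    nlinarith

end softThreshReal

theorem softThresh_minimizes {L : ℕ} {τ : ℝ} (hτ : 0 ≤ τ) (w v : EuclideanSpace ℝ (Fin L)) :
    τ * ∑ k, |softThresh τ w k| + ‖softThresh τ w - w‖ ^ 2 / 2 ≤
      τ * ∑ k, |v k| + ‖v - w‖ ^ 2 / 2 := by
  simp only [EuclideanSpace.real_norm_sq_eq, PiLp.sub_apply, softThresh_apply, Finset.mul_sum,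
    Finset.sum_div, ← Finset.sum_add_distrib]
  exact Finset.sum_le_sum fun k _ => softThreshReal_minimizes hτ (v k)

section adjoint

variable {𝕜 E F : Type*} [RCLike 𝕜] [NormedAddCommGroup E] [InnerProductSpace 𝕜 E]
  [CompleteSpace E] [NormedAddCommGroup F] [InnerProductSpace 𝕜 F] [CompleteSpace F]

theorem ContinuousLinearMap.norm_adjoint_apply_le_of_adjoint_comp_self {Ψ : E →L[𝕜] F}
    (h : adjoint Ψ ∘L Ψ = 1) (y : F) : ‖adjoint Ψ y‖ ≤ ‖y‖ := by
  have hΨ : ‖Ψ‖ ≤ 1 :=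
    opNorm_le_bound _ zero_le_one fun x => by
      rw [Ψ.norm_map_iff_adjoint_comp_self.mpr h, one_mul]
  calc ‖adjoint Ψ y‖ ≤ ‖adjoint Ψ‖ * ‖y‖ := le_opNorm _ _
    _ = ‖Ψ‖ * ‖y‖ := by rw [LinearIsometryEquiv.norm_map]
    _ ≤ ‖y‖ := mul_le_of_le_one_left (norm_nonneg y) hΨ

end adjoint

/-- Equation (35) of the paper: under `Ψ† Ψ = I`, the proximity operator at `z` with
parameter `λ` of the analysis sparsity prior `x ↦ μ ‖Ψ† x‖₁` is given explicitly by
`z + Ψ (soft_{λμ}(Ψ† z) - Ψ† z)`, i.e. this point globally minimises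
`u ↦ μ ‖Ψ† u‖₁ + ‖u - z‖² / (2λ)`. -/
theorem analysis_prox_soft_thresholding
    (L N : ℕ)
    (Ψ : EuclideanSpace ℝ (Fin L) →L[ℝ] EuclideanSpace ℝ (Fin N))
    (h : (adjoint Ψ).comp Ψ = ContinuousLinearMap.id ℝ (EuclideanSpace ℝ (Fin L)))
    (lam μ : ℝ) (hlam : 0 < lam) (hμ : 0 < μ)
    (z : EuclideanSpace ℝ (Fin N)) :
    ∀ u : EuclideanSpace ℝ (Fin N),
      μ * (∑ k, |adjoint Ψ (z + Ψ (softThresh (lam * μ) (adjoint Ψ z) - adjoint Ψ z)) k|) +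
          ‖z + Ψ (softThresh (lam * μ) (adjoint Ψ z) - adjoint Ψ z) - z‖ ^ 2 / (2 * lam) ≤
        μ * (∑ k, |adjoint Ψ u k|) + ‖u - z‖ ^ 2 / (2 * lam) := by
  intro u
  set w := adjoint Ψ z
  set s := softThresh (lam * μ) w
  set v := adjoint Ψ u
  have hΨ : adjoint Ψ ∘L Ψ = 1 := h
  have hcand : adjoint Ψ (z + Ψ (s - w)) = s := by
    rw [map_add, ← comp_apply, hΨ, one_apply_eq_self, add_sub_cancel]
  have hdist : ‖v - w‖ ≤ ‖u - z‖ := by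
    rw [← map_sub]
    exact norm_adjoint_apply_le_of_adjoint_comp_self hΨ _
  rw [hcand, add_sub_cancel_left, Ψ.norm_map_iff_adjoint_comp_self.mpr hΨ]
  have key := softThresh_minimizes (mul_pos hlam hμ).le w v
  calc μ * ∑ k, |s k| + ‖s - w‖ ^ 2 / (2 * lam)
      = (lam * μ * ∑ k, |s k| + ‖s - w‖ ^ 2 / 2) / lam := by field_simp
    _ ≤ (lam * μ * ∑ k, |v k| + ‖v - w‖ ^ 2 / 2) / lam := by gcongr
    _ ≤ (lam * μ * ∑ k, |v k| + ‖u - z‖ ^ 2 / 2) / lam := by gcongr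
    _ = μ * ∑ k, |v k| + ‖u - z‖ ^ 2 / (2 * lam) := by field_simp
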